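/- arXiv:2305.04330 — 3 statements merged into one kernel-verified Lean document; each statement's English description precedes it below -/
import Mathlib

section
/- Let Σ̂ ∈ ℝ^{p×p} be a symmetric positive definite Tyler fixed point for nonzero data vectors x₁,…,xₙ ∈ ℝᵖ with tr(Σ̂) = p, and let A ∈ ℝ^{p×p} be invertible. Set c = p / tr(A Σ̂ Aᵀ) (note tr(A Σ̂ Aᵀ) > 0 since A Σ̂ Aᵀ is positive definite) and Σ̂* = c · A Σ̂ Aᵀ. Then Σ̂* is symmetric positive definite, satisfies tr(Σ̂*) = p, and satisfies Tyler's fixed-point equation for the transformed data {A xᵢ}: Σ̂* = (1/n)∑_{i=1}^n (p/((A xᵢ)ᵀ (Σ̂*)⁻¹ (A xᵢ))) (A xᵢ)(A xᵢ)ᵀ. -/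
/-!
Tyler's equation is invariant under the congruence `S ↦ A S Aᵀ`, `xᵢ ↦ A xᵢ`, since the
quadratic forms `xᵢᵀ S⁻¹ xᵢ` do not change, and under scaling `S ↦ c S`, since both sides
scale by `c`. The constant `c` only normalises the trace.
-/

open Matrix

/-- Tyler's fixed-point equation alone; positive definiteness is stated separately. -/
def IsTylerFixedPoint {ι m : Type*} [Fintype ι] [Fintype m] [DecidableEq m]
    (x : ι → m → ℝ) (S : Matrix m m ℝ) : Prop :=
  S = (Fintype.card ι : ℝ)⁻¹ • ∑ i, ((Fintype.card m : ℝ) / (x i ⬝ᵥ S⁻¹ *ᵥ x i)) •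
    vecMulVec (x i) (x i)

namespace Matrix

variable {m : Type*} [Fintype m]

lemma vecMulVec_mulVec_self {R : Type*} [CommSemiring R] (A : Matrix m m R) (v : m → R) :
    vecMulVec (A *ᵥ v) (A *ᵥ v) = A * vecMulVec v v * Aᵀ := by
  rw [mul_vecMulVec, vecMulVec_mul, vecMul_transpose]

lemma dotProduct_congr_inv_mulVec [DecidableEq m] {K : Type*} [Field K] {A : Matrix m m K}
    (hA : IsUnit A.det) (M : Matrix m m K) (v : m → K) :
    (A *ᵥ v) ⬝ᵥ (Aᵀ⁻¹ * M * A⁻¹) *ᵥ (A *ᵥ v) = v ⬝ᵥ M *ᵥ v := by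
  have hcancel : A⁻¹ *ᵥ (A *ᵥ v) = v := by
    rw [mulVec_mulVec, nonsing_inv_mul _ hA, one_mulVec]
  rw [← mulVec_mulVec, ← mulVec_mulVec, hcancel, dotProduct_mulVec, ← transpose_nonsing_inv,
    vecMul_transpose, hcancel]

lemma PosDef.mul_mul_transpose_of_isUnit_det [DecidableEq m] {S A : Matrix m m ℝ}
    (hS : S.PosDef) (hA : IsUnit A.det) : (A * S * Aᵀ).PosDef := by
  simpa using hS.mul_mul_conjTranspose_same (B := A)
    (vecMul_injective_iff_isUnit.mpr ((isUnit_iff_isUnit_det A).mpr hA))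

end Matrix

namespace IsTylerFixedPoint

variable {ι m : Type*} [Fintype ι] [Fintype m] [DecidableEq m] {x : ι → m → ℝ}
  {S : Matrix m m ℝ}

lemma smul (hfix : IsTylerFixedPoint x S) (hS : IsUnit S.det) {c : ℝ} (hc : c ≠ 0) :
    IsTylerFixedPoint x (c • S) := by
  have hcoef : ∀ i, (Fintype.card m : ℝ) / (x i ⬝ᵥ (c • S)⁻¹ *ᵥ x i)
      = c * ((Fintype.card m : ℝ) / (x i ⬝ᵥ S⁻¹ *ᵥ x i)) := fun i => by
    have : Invertible c := invertibleOfNonzero hc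
    rw [Matrix.inv_smul (A := S) c hS, invOf_eq_inv, smul_mulVec, dotProduct_smul, smul_eq_mul,
      div_mul_eq_div_div, div_inv_eq_mul, mul_comm, mul_div_assoc]
  unfold IsTylerFixedPoint at hfix ⊢
  conv_lhs => rw [hfix]
  rw [smul_comm c, Finset.smul_sum]
  simp only [hcoef, mul_smul]

lemma mulVec {A : Matrix m m ℝ} (hfix : IsTylerFixedPoint x S) (hA : IsUnit A.det) :
    IsTylerFixedPoint (fun i => A *ᵥ x i) (A * S * Aᵀ) := by
  have hquad : ∀ i, (A *ᵥ x i) ⬝ᵥ (A * S * Aᵀ)⁻¹ *ᵥ (A *ᵥ x i) = x i ⬝ᵥ S⁻¹ *ᵥ x i := by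
    intro i
    rw [Matrix.mul_inv_rev, Matrix.mul_inv_rev, ← Matrix.mul_assoc,
      dotProduct_congr_inv_mulVec hA]
  unfold IsTylerFixedPoint at hfix ⊢
  conv_lhs => rw [hfix]
  simp only [hquad, vecMulVec_mulVec_self, Matrix.mul_smul, Matrix.smul_mul, Matrix.mul_sum,
    Matrix.sum_mul]

end IsTylerFixedPoint

theorem tyler_fixed_point_affine_equivariance_general
    {p n : ℕ} (hp : 0 < p)
    (x : Fin n → (Fin p → ℝ))
    (S : Matrix (Fin p) (Fin p) ℝ) (hS : S.PosDef)
    (hfix : S = (n : ℝ)⁻¹ • ∑ i : Fin n,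
      ((p : ℝ) / (x i ⬝ᵥ S⁻¹ *ᵥ x i)) • vecMulVec (x i) (x i))
    (A : Matrix (Fin p) (Fin p) ℝ) (hA : IsUnit A.det)
    (c : ℝ) (hc : c = (p : ℝ) / (A * S * Aᵀ).trace)
    (Sstar : Matrix (Fin p) (Fin p) ℝ) (hSstar : Sstar = c • (A * S * Aᵀ)) :
    Sstar.PosDef ∧ Sstar.trace = (p : ℝ) ∧
    Sstar = (n : ℝ)⁻¹ • ∑ i : Fin n,
      ((p : ℝ) / ((A *ᵥ x i) ⬝ᵥ Sstar⁻¹ *ᵥ (A *ᵥ x i))) •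
        vecMulVec (A *ᵥ x i) (A *ᵥ x i) := by
  have : Nonempty (Fin p) := Fin.pos_iff_nonempty.mp hp
  have hM : (A * S * Aᵀ).PosDef := hS.mul_mul_transpose_of_isUnit_det hA
  have htrM : 0 < (A * S * Aᵀ).trace := hM.trace_pos
  have hc0 : 0 < c := hc ▸ div_pos (Nat.cast_pos.mpr hp) htrM
  have hfixM : IsTylerFixedPoint (fun i => A *ᵥ x i) (A * S * Aᵀ) :=
    IsTylerFixedPoint.mulVec (by simpa [IsTylerFixedPoint] using hfix) hA
  refine ⟨hSstar ▸ hM.smul hc0, ?_, ?_⟩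
  · rw [hSstar, trace_smul, hc, smul_eq_mul, div_mul_cancel₀ _ htrM.ne']
  · simpa [IsTylerFixedPoint, ← hSstar] using
      hfixM.smul (isUnit_iff_ne_zero.mpr hM.det_pos.ne') hc0.ne'

/-- Equivariance of Tyler's M-estimator: if `S` is a Tyler fixed point for nonzero data
`x i` with `tr S = p` and `A` is invertible, then `Σ̂* = c • (A S Aᵀ)` with
`c = p / tr (A S Aᵀ)` is symmetric positive definite, has trace `p`, and satisfies
Tyler's fixed-point equation for the transformed data `A *ᵥ x i`. -/
theorem tyler_fixed_point_affine_equivariance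
    {p n : ℕ} (hp : 0 < p) (hn : 0 < n)
    (x : Fin n → (Fin p → ℝ)) (hx : ∀ i, x i ≠ 0)
    (S : Matrix (Fin p) (Fin p) ℝ) (hS : S.PosDef)
    (hfix : S = (n : ℝ)⁻¹ • ∑ i : Fin n,
      ((p : ℝ) / (x i ⬝ᵥ S⁻¹ *ᵥ x i)) • vecMulVec (x i) (x i))
    (htr : S.trace = (p : ℝ))
    (A : Matrix (Fin p) (Fin p) ℝ) (hA : IsUnit A.det)
    (c : ℝ) (hc : c = (p : ℝ) / (A * S * Aᵀ).trace)
    (Sstar : Matrix (Fin p) (Fin p) ℝ) (hSstar : Sstar = c • (A * S * Aᵀ)) :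
    Sstar.PosDef ∧ Sstar.trace = (p : ℝ) ∧
    Sstar = (n : ℝ)⁻¹ • ∑ i : Fin n,
      ((p : ℝ) / ((A *ᵥ x i) ⬝ᵥ Sstar⁻¹ *ᵥ (A *ᵥ x i))) •
        vecMulVec (A *ᵥ x i) (A *ᵥ x i) :=
  tyler_fixed_point_affine_equivariance_general hp x S hS hfix A hA c hc Sstar hSstar
end

section
/- Let Σ̂ ∈ ℝ^{p×p} be a symmetric positive definite Tyler fixed point for nonzero data vectors x₁,…,xₙ ∈ ℝᵖ with tr(Σ̂) = p, let A ∈ ℝ^{p×p} be invertible, set c = p / tr(A Σ̂ Aᵀ) and Σ̂* = c · A Σ̂ Aᵀ. Let η̂_TWE = ((p/n)∑_{i=1}^n (xᵢᵀ Σ̂⁻¹ xᵢ)⁻¹)⁻¹ be the TWE scale of {xᵢ} and let η̂* = ((p/n)∑_{i=1}^n ((A xᵢ)ᵀ (Σ̂*)⁻¹ (A xᵢ))⁻¹)⁻¹ be the TWE scale of the transformed data {A xᵢ} computed from Σ̂*. Then η̂* = c⁻¹ · η̂_TWE. -/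
open Matrix Finset

/-! The scale equivariance is pure linear algebra: for invertible `A`,
`(A x)ᵀ (c A S Aᵀ)⁻¹ (A x) = c⁻¹ · xᵀ S⁻¹ x`, so every Tyler weight of the transformed data is
`c` times the original one, and the TWE scale, the inverse of their mean, is divided by `c`. -/

namespace Matrix

variable {m K : Type*} [Fintype m] [DecidableEq m]

theorem inv_smul_of_field [Field K] (k : K) (M : Matrix m m K) : (k • M)⁻¹ = k⁻¹ • M⁻¹ := by
  rcases eq_or_ne k 0 with rfl | hk
  · simp
  by_cases hM : IsUnit M.det
  · exact inv_smul' M (Units.mk0 k hk) hM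
  have hkM : ¬IsUnit (k • M).det := by
    rwa [det_smul, IsUnit.mul_iff, and_iff_right ((Ne.isUnit hk).pow _)]
  rw [nonsing_inv_apply_not_isUnit _ hkM, nonsing_inv_apply_not_isUnit _ hM, smul_zero]

theorem dotProduct_mulVec_inv_conj {R : Type*} [CommRing R] {A : Matrix m m R}
    (hA : IsUnit A.det) (M : Matrix m m R) (v : m → R) :
    A *ᵥ v ⬝ᵥ (A * M * Aᵀ)⁻¹ *ᵥ (A *ᵥ v) = v ⬝ᵥ M⁻¹ *ᵥ v := by
  rw [mul_inv_rev, mul_inv_rev, ← transpose_nonsing_inv, mulVec_mulVec, Matrix.mul_assoc,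
    Matrix.mul_assoc, nonsing_inv_mul _ hA, Matrix.mul_one, ← mulVec_mulVec, dotProduct_mulVec,
    vecMul_transpose, mulVec_mulVec, nonsing_inv_mul _ hA, one_mulVec]

theorem dotProduct_mulVec_inv_smul_conj [Field K] {A : Matrix m m K} (hA : IsUnit A.det)
    (c : K) (M : Matrix m m K) (v : m → K) :
    A *ᵥ v ⬝ᵥ (c • (A * M * Aᵀ))⁻¹ *ᵥ (A *ᵥ v) = c⁻¹ * (v ⬝ᵥ M⁻¹ *ᵥ v) := by
  rw [inv_smul_of_field, smul_mulVec, dotProduct_smul, dotProduct_mulVec_inv_conj hA, smul_eq_mul]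

end Matrix

theorem inv_mul_sum_inv_inv_mul {ι K : Type*} [Fintype ι] [Field K] (a c : K) (q : ι → K) :
    (a * ∑ i, (c⁻¹ * q i)⁻¹)⁻¹ = c⁻¹ * (a * ∑ i, (q i)⁻¹)⁻¹ := by
  simp only [mul_inv, inv_inv, ← Finset.mul_sum]
  ring

theorem twe_scale_affine_equivariance_general
    {p n : ℕ}
    (x : Fin n → (Fin p → ℝ))
    (S : Matrix (Fin p) (Fin p) ℝ)
    (A : Matrix (Fin p) (Fin p) ℝ) (hA : IsUnit A.det)
    (c : ℝ)
    (Sstar : Matrix (Fin p) (Fin p) ℝ) (hSstar : Sstar = c • (A * S * Aᵀ))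
    (η : ℝ) (hη : η = (((p : ℝ) / n) * ∑ i : Fin n, (x i ⬝ᵥ S⁻¹ *ᵥ x i)⁻¹)⁻¹)
    (ηstar : ℝ)
    (hηstar : ηstar = (((p : ℝ) / n) *
      ∑ i : Fin n, ((A *ᵥ x i) ⬝ᵥ Sstar⁻¹ *ᵥ (A *ᵥ x i))⁻¹)⁻¹) :
    ηstar = c⁻¹ * η := by
  simp only [hηstar, hη, hSstar, dotProduct_mulVec_inv_smul_conj hA]
  exact inv_mul_sum_inv_inv_mul _ _ _

/-- Under the affine transformation `x i ↦ A *ᵥ x i` with `A` invertible, the TWE scale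
computed from `Σ̂* = c • (A S Aᵀ)`, `c = p / tr (A S Aᵀ)`, satisfies
`η̂* = c⁻¹ · η̂_TWE`. -/
theorem twe_scale_affine_equivariance
    {p n : ℕ} (hp : 0 < p) (hn : 0 < n)
    (x : Fin n → (Fin p → ℝ)) (hx : ∀ i, x i ≠ 0)
    (S : Matrix (Fin p) (Fin p) ℝ) (hS : S.PosDef)
    (hfix : S = (n : ℝ)⁻¹ • ∑ i : Fin n,
      ((p : ℝ) / (x i ⬝ᵥ S⁻¹ *ᵥ x i)) • vecMulVec (x i) (x i))
    (htr : S.trace = (p : ℝ))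
    (A : Matrix (Fin p) (Fin p) ℝ) (hA : IsUnit A.det)
    (c : ℝ) (hc : c = (p : ℝ) / (A * S * Aᵀ).trace)
    (Sstar : Matrix (Fin p) (Fin p) ℝ) (hSstar : Sstar = c • (A * S * Aᵀ))
    (η : ℝ) (hη : η = (((p : ℝ) / n) * ∑ i : Fin n, (x i ⬝ᵥ S⁻¹ *ᵥ x i)⁻¹)⁻¹)
    (ηstar : ℝ)
    (hηstar : ηstar = (((p : ℝ) / n) *
      ∑ i : Fin n, ((A *ᵥ x i) ⬝ᵥ Sstar⁻¹ *ᵥ (A *ᵥ x i))⁻¹)⁻¹) :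
    ηstar = c⁻¹ * η :=
  twe_scale_affine_equivariance_general x S A hA c Sstar hSstar η hη ηstar hηstar
end

section
/- (Affine equivariance of the TWE scatter matrix.) Let Σ̂ ∈ ℝ^{p×p} be a symmetric positive definite Tyler fixed point for nonzero data vectors x₁,…,xₙ ∈ ℝᵖ with tr(Σ̂) = p, and let A ∈ ℝ^{p×p} be invertible. Set c = p / tr(A Σ̂ Aᵀ) and Σ̂* = c · A Σ̂ Aᵀ. Let Σ̂_TWE = η̂_TWE · Σ̂ with η̂_TWE = ((p/n)∑_{i=1}^n (xᵢᵀ Σ̂⁻¹ xᵢ)⁻¹)⁻¹, and let Σ̂*_TWE = η̂* · Σ̂* with η̂* = ((p/n)∑_{i=1}^n ((A xᵢ)ᵀ (Σ̂*)⁻¹ (A xᵢ))⁻¹)⁻¹ be the TWE scatter matrix of the transformed data {A xᵢ}. Then Σ̂*_TWE = A Σ̂_TWE Aᵀ. -/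
/-!
Replacing `xᵢ` by `A xᵢ` and `Σ̂` by `c A Σ̂ Aᵀ` multiplies each quadratic form `xᵢᵀ Σ̂⁻¹ xᵢ`
by `c⁻¹`, so the TWE scale becomes `c⁻¹ η̂_TWE`, which cancels the factor `c` in `Σ̂*`.
-/

open Matrix

section

variable {m : Type*} [Fintype m] [DecidableEq m]

theorem Matrix.dotProduct_inv_mul_mul_transpose_mulVec {R : Type*} [CommRing R]
    {A : Matrix m m R} (hA : IsUnit A.det) (M : Matrix m m R) (v : m → R) :
    (A *ᵥ v) ⬝ᵥ (A * M * Aᵀ)⁻¹ *ᵥ (A *ᵥ v) = v ⬝ᵥ M⁻¹ *ᵥ v := by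
  have hAT : IsUnit Aᵀ.det := by rwa [det_transpose]
  have hconj : Aᵀ * (A * M * Aᵀ)⁻¹ * A = M⁻¹ := by
    rw [mul_inv_rev, mul_inv_rev, ← Matrix.mul_assoc, mul_nonsing_inv _ hAT, Matrix.one_mul,
      Matrix.mul_assoc, nonsing_inv_mul _ hA, Matrix.mul_one]
  rw [← hconj, Matrix.mul_assoc, ← mulVec_mulVec, ← mulVec_mulVec, dotProduct_mulVec v,
    vecMul_transpose]

theorem Matrix.inv_smul_of_ne_zero {K : Type*} [Field K] (M : Matrix m m K) {c : K}
    (hc : c ≠ 0) :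
    (c • M)⁻¹ = c⁻¹ • M⁻¹ := by
  by_cases hM : IsUnit M.det
  · exact inv_smul' M (Units.mk0 c hc) hM
  · have hcM : ¬IsUnit (c • M).det := by
      rwa [det_smul, IsUnit.mul_iff, and_iff_right (pow_ne_zero _ hc).isUnit]
    rw [nonsing_inv_apply_not_isUnit _ hM, nonsing_inv_apply_not_isUnit _ hcM, smul_zero]

end

noncomputable def tweScale {p n : ℕ} (x : Fin n → Fin p → ℝ) (S : Matrix (Fin p) (Fin p) ℝ) :
    ℝ :=
  ((p : ℝ) / n * ∑ i, (x i ⬝ᵥ S⁻¹ *ᵥ x i)⁻¹)⁻¹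

theorem tweScale_smul_conj {p n : ℕ} (x : Fin n → Fin p → ℝ) (S : Matrix (Fin p) (Fin p) ℝ)
    {A : Matrix (Fin p) (Fin p) ℝ} (hA : IsUnit A.det) {c : ℝ} (hc : c ≠ 0) :
    tweScale (fun i ↦ A *ᵥ x i) (c • (A * S * Aᵀ)) = c⁻¹ * tweScale x S := by
  simp only [tweScale, inv_smul_of_ne_zero _ hc, smul_mulVec, dotProduct_smul, smul_eq_mul,
    dotProduct_inv_mul_mul_transpose_mulVec hA, mul_inv, inv_inv, ← Finset.mul_sum]
  ring

theorem twe_scatter_affine_equivariance_general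
    {p n : ℕ} (hp : 0 < p)
    (x : Fin n → (Fin p → ℝ))
    (S : Matrix (Fin p) (Fin p) ℝ) (hS : S.PosDef)
    (A : Matrix (Fin p) (Fin p) ℝ) (hA : IsUnit A.det)
    (c : ℝ) (hc : c = (p : ℝ) / (A * S * Aᵀ).trace)
    (Sstar : Matrix (Fin p) (Fin p) ℝ) (hSstar : Sstar = c • (A * S * Aᵀ))
    (η : ℝ) (hη : η = (((p : ℝ) / n) * ∑ i : Fin n, (x i ⬝ᵥ S⁻¹ *ᵥ x i)⁻¹)⁻¹)
    (ηstar : ℝ)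
    (hηstar : ηstar = (((p : ℝ) / n) *
      ∑ i : Fin n, ((A *ᵥ x i) ⬝ᵥ Sstar⁻¹ *ᵥ (A *ᵥ x i))⁻¹)⁻¹) :
    ηstar • Sstar = A * (η • S) * Aᵀ := by
  have : Nonempty (Fin p) := ⟨⟨0, hp⟩⟩
  have hASA : (A * S * Aᵀ).PosDef := by
    simpa using hS.mul_mul_conjTranspose_same
      (vecMul_injective_of_isUnit ((isUnit_iff_isUnit_det A).mpr hA))
  have hc0 : c ≠ 0 := hc ▸ div_ne_zero (by positivity) hASA.trace_pos.ne'
  have hscale : ηstar = c⁻¹ * η := by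
    subst hSstar hη hηstar
    exact tweScale_smul_conj x S hA hc0
  rw [hscale, hSstar, smul_smul, mul_right_comm, inv_mul_cancel₀ hc0, one_mul,
    Matrix.mul_smul, Matrix.smul_mul]

/-- Affine equivariance of the TWE scatter matrix: with `Σ̂* = c • (A S Aᵀ)`,
`c = p / tr (A S Aᵀ)`, the TWE scatter matrix of the transformed data `A *ᵥ x i`
satisfies `Σ̂*_TWE = A Σ̂_TWE Aᵀ`. -/
theorem twe_scatter_affine_equivariance
    {p n : ℕ} (hp : 0 < p) (hn : 0 < n)
    (x : Fin n → (Fin p → ℝ)) (hx : ∀ i, x i ≠ 0)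
    (S : Matrix (Fin p) (Fin p) ℝ) (hS : S.PosDef)
    (hfix : S = (n : ℝ)⁻¹ • ∑ i : Fin n,
      ((p : ℝ) / (x i ⬝ᵥ S⁻¹ *ᵥ x i)) • vecMulVec (x i) (x i))
    (htr : S.trace = (p : ℝ))
    (A : Matrix (Fin p) (Fin p) ℝ) (hA : IsUnit A.det)
    (c : ℝ) (hc : c = (p : ℝ) / (A * S * Aᵀ).trace)
    (Sstar : Matrix (Fin p) (Fin p) ℝ) (hSstar : Sstar = c • (A * S * Aᵀ))
    (η : ℝ) (hη : η = (((p : ℝ) / n) * ∑ i : Fin n, (x i ⬝ᵥ S⁻¹ *ᵥ x i)⁻¹)⁻¹)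
    (ηstar : ℝ)
    (hηstar : ηstar = (((p : ℝ) / n) *
      ∑ i : Fin n, ((A *ᵥ x i) ⬝ᵥ Sstar⁻¹ *ᵥ (A *ᵥ x i))⁻¹)⁻¹) :
    ηstar • Sstar = A * (η • S) * Aᵀ :=
  twe_scatter_affine_equivariance_general hp x S hS A hA c hc Sstar hSstar η hη ηstar hηstar
end
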